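/- Let r ≥ 3 and s ≥ 2, and let H be an r-graph on a finite vertex set V containing no bush B_{s,1}(1, r−1). For u ∈ Y ∈ H put Q(Y,u) = { z ∈ V \ Y : (Y \ {u}) ∪ {z} ∈ H }, and assume H is s-normal in the sense that |Q(Y,u)| ≥ s − 1 for every edge Y ∈ H and every u ∈ Y. For each u ∈ Y ∈ H fix a set Q′(Y,u) ⊆ Q(Y,u) with |Q′(Y,u)| = min(s, |Q(Y,u)|). Suppose u ∈ V and P′ ⊆ H is a star with kernel {u} (i.e., P_1 ∩ P_2 = {u} for all distinct P_1, P_2 ∈ P′) with |P′| ≥ r + 2s − 2, which is separable: (⋃_{P∈P′} Q′(P,u)) ∩ (⋃_{P∈P′} P) = ∅. Then there exists a unique set T(u) of size s − 1 such that Q(P,u) = T(u) for every P ∈ P′; moreover, Q(Y,u) = T(u) for every edge Y ∈ H with u ∈ Y and Y ∩ T(u) = ∅. -/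

import Mathlib

/-- An `r`-graph `H` over a vertex type `V` contains the bush `B_{s,h}(a,b)`. -/
def ContainsBush {V : Type*} [DecidableEq V] (a b s h : ℕ) (H : Finset (Finset V)) : Prop :=
  ∃ (A : Finset V) (B : Fin s → Finset V) (P : Fin s → Fin h → Finset V),
    A.card = a ∧ (∀ i, (B i).card = b) ∧ (∀ i j, (P i j).card = a) ∧
    (∀ i, Disjoint A (B i)) ∧ (∀ i j, Disjoint A (P i j)) ∧
    (∀ i i', i ≠ i' → Disjoint (B i) (B i')) ∧
    (∀ i j i' j', (i, j) ≠ (i', j') → Disjoint (P i j) (P i' j')) ∧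
    (∀ i i' j, Disjoint (B i) (P i' j)) ∧
    (∀ i, A ∪ B i ∈ H) ∧ (∀ i j, B i ∪ P i j ∈ H)

/-!
If the sets `Q'(P, u)` of `s` petals of the star had a system of distinct representatives,
then by separability the petals together with their representatives would form a bush
`B_{s,1}(1, r - 1)`. So Hall's condition fails, and since each `Q'(P, u)` has at least `s - 1`
elements, all `s` of them are one and the same set of size `s - 1`; covering any two petals by
`s` of them, `Q(P, u) = Q'(P, u)` is a single set `T` for the whole star.

For an edge `Y ∋ u` missing `T`, a replacement `z ∉ T` of `u` in `Y` would give an edge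
`W = Y - u + z` avoiding `u`, which meets at most `r` petals. Matching `s - 1` petals disjoint
from `W` with the elements of `T`, and `Y` with `z`, again yields a bush.
-/

section

open Finset Function

theorem Finset.exists_forall_eq_of_not_exists_injective {ι α : Type*} [Fintype ι]
    [DecidableEq α] (f : ι → Finset α) (hf : ∀ i, Fintype.card ι - 1 ≤ #(f i))
    (h : ¬ ∃ g : ι → α, Injective g ∧ ∀ i, g i ∈ f i) :
    ∃ T : Finset α, #T = Fintype.card ι - 1 ∧ ∀ i, f i = T := by
  obtain ⟨S, hS⟩ : ∃ S : Finset ι, #(S.biUnion f) < #S := by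
    by_contra! hall
    exact h ((all_card_le_biUnion_card_iff_exists_injective f).1 hall)
  obtain ⟨i₀, hi₀⟩ : S.Nonempty := nonempty_of_ne_empty (by rintro rfl; simp at hS)
  have hfS : ∀ i ∈ S, f i ⊆ S.biUnion f := fun i hi => subset_biUnion_of_mem f hi
  have hSle : #S ≤ Fintype.card ι := card_le_univ S
  have hi₀card := (hf i₀).trans (card_le_card (hfS i₀ hi₀))
  have hT : #(S.biUnion f) = Fintype.card ι - 1 := by omega
  have hSuniv : S = univ := eq_univ_of_card S (by omega)
  exact ⟨S.biUnion f, hT, fun i =>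
    eq_of_subset_of_card_le (hfS i (hSuniv ▸ mem_univ i)) (hT ▸ hf i)⟩

variable {V : Type*} [DecidableEq V]

/-- The set `Q(Y, u)` of the paper. -/
def replacements [Fintype V] (H : Finset (Finset V)) (Y : Finset V) (u : V) : Finset V :=
  {z | z ∉ Y ∧ insert z (Y.erase u) ∈ H}

theorem mem_replacements [Fintype V] {H : Finset (Finset V)} {Y : Finset V} {u z : V} :
    z ∈ replacements H Y u ↔ z ∉ Y ∧ insert z (Y.erase u) ∈ H := by
  simp [replacements]

theorem disjoint_erase_of_inter_eq_singleton {P₁ P₂ : Finset V} {u : V}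
    (h : P₁ ∩ P₂ = {u}) : Disjoint (P₁.erase u) (P₂.erase u) := by
  simp [disjoint_iff_inter_eq_empty, erase_inter, inter_erase, h]

theorem card_filter_not_disjoint_le_of_star {𝓟 : Finset (Finset V)} {u : V} {W : Finset V}
    (hstar : (𝓟 : Set (Finset V)).Pairwise fun P₁ P₂ => P₁ ∩ P₂ = {u}) (huW : u ∉ W) :
    #{P ∈ 𝓟 | ¬Disjoint P W} ≤ #W := by
  refine card_le_card_of_forall_subsingleton (fun P w => w ∈ P) (fun P hP => ?_) ?_
  · obtain ⟨w, hwP, hwW⟩ := not_disjoint_iff.1 (mem_filter.1 hP).2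
    exact ⟨w, hwW, hwP⟩
  · intro w hw P₁ ⟨h₁, hw₁⟩ P₂ ⟨h₂, hw₂⟩
    by_contra hne
    have hwu : w ∈ P₁ ∩ P₂ := mem_inter.2 ⟨hw₁, hw₂⟩
    rw [hstar (mem_filter.1 h₁).1 (mem_filter.1 h₂).1 hne, mem_singleton] at hwu
    exact huW (hwu ▸ hw)

theorem exists_subset_card_eq_forall_disjoint_of_star {𝓟 : Finset (Finset V)} {u : V}
    {W : Finset V} {k : ℕ} (hstar : (𝓟 : Set (Finset V)).Pairwise fun P₁ P₂ => P₁ ∩ P₂ = {u})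
    (huW : u ∉ W) (hk : #W + k ≤ #𝓟) : ∃ t ⊆ 𝓟, #t = k ∧ ∀ P ∈ t, Disjoint P W := by
  obtain ⟨t, ht, htcard⟩ : ∃ t ⊆ {P ∈ 𝓟 | Disjoint P W}, #t = k := by
    refine exists_subset_card_eq ?_
    have := card_filter_not_disjoint_le_of_star hstar huW
    have := card_filter_add_card_filter_not (s := 𝓟) fun P => Disjoint P W
    omega
  exact ⟨t, ht.trans (filter_subset _ _), htcard, fun P hP => (mem_filter.1 (ht hP)).2⟩

theorem containsBush_of_star {ι : Type*} [Fintype ι] {H : Finset (Finset V)} {r : ℕ} {u : V}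
    (E : ι → Finset V) (p : ι → V) (hEH : ∀ i, E i ∈ H) (hEcard : ∀ i, #(E i) = r)
    (huE : ∀ i, u ∈ E i) (hE : Pairwise fun i j => Disjoint ((E i).erase u) ((E j).erase u))
    (hp : Injective p) (hpE : ∀ i j, p i ∉ E j)
    (hpH : ∀ i, insert (p i) ((E i).erase u) ∈ H) :
    ContainsBush 1 (r - 1) (Fintype.card ι) 1 H := by
  let e := (Fintype.equivFin ι).symm
  have hpu : ∀ i, p i ≠ u := fun i h => hpE i i (h ▸ huE i)
  refine ⟨{u}, fun i => (E (e i)).erase u, fun i _ => {p (e i)}, card_singleton u, fun i => ?_,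
    fun _ _ => card_singleton _, fun i => ?_, fun i _ => ?_,
    fun i i' h => hE (e.injective.ne h), fun i j i' j' h => ?_, fun i i' _ => ?_,
    fun i => ?_, fun i _ => ?_⟩
  · rw [card_erase_of_mem (huE _), hEcard]
  · simp
  · simpa using (hpu _).symm
  · have hii' : i ≠ i' := fun hii' => h (by rw [hii', Subsingleton.elim j j'])
    exact disjoint_singleton.2 (hp.ne (e.injective.ne hii'))
  · exact disjoint_singleton_right.2 fun h => hpE _ _ (mem_of_mem_erase h)
  · rw [← insert_eq, insert_erase (huE _)]
    exact hEH _
  · rw [union_comm, ← insert_eq]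
    exact hpH _

theorem exists_forall_eq_of_star_of_not_containsBush {H : Finset (Finset V)} {r : ℕ} {u : V}
    {t : Finset (Finset V)} (Q' : Finset V → Finset V) (hHcard : ∀ e ∈ H, #e = r)
    (hbush : ¬ContainsBush 1 (r - 1) #t 1 H) (ht : t ⊆ H) (htu : ∀ P ∈ t, u ∈ P)
    (hstar : (t : Set (Finset V)).Pairwise fun P₁ P₂ => P₁ ∩ P₂ = {u})
    (hQ'H : ∀ P ∈ t, ∀ z ∈ Q' P, insert z (P.erase u) ∈ H)
    (hQ'card : ∀ P ∈ t, #t - 1 ≤ #(Q' P)) (hsep : ∀ P ∈ t, ∀ P' ∈ t, Disjoint (Q' P) P') :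
    ∃ T, #T = #t - 1 ∧ ∀ P ∈ t, Q' P = T := by
  have hno_transversal : ¬∃ g : t → V, Injective g ∧ ∀ P : t, g P ∈ Q' P := by
    rintro ⟨g, hg, hgQ'⟩
    refine hbush ?_
    simpa using containsBush_of_star (ι := t) Subtype.val g (fun P => ht P.2)
      (fun P => hHcard _ (ht P.2)) (fun P => htu _ P.2)
      (fun P P' h => disjoint_erase_of_inter_eq_singleton (hstar P.2 P'.2 (Subtype.coe_ne_coe.2 h)))
      hg (fun P P' => disjoint_left.1 (hsep _ P.2 _ P'.2) (hgQ' P))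
      (fun P => hQ'H _ P.2 _ (hgQ' P))
  obtain ⟨T, hT, hQ'T⟩ := exists_forall_eq_of_not_exists_injective (fun P : t => Q' P)
    (by simpa using fun P : t => hQ'card P P.2) hno_transversal
  exact ⟨T, by simpa using hT, fun P hP => hQ'T ⟨P, hP⟩⟩

theorem exists_replacements_eq_of_separable_star [Fintype V] {H : Finset (Finset V)} {r s : ℕ}
    {u : V} {𝓟 : Finset (Finset V)} (Q' : Finset V → Finset V) (hs : 2 ≤ s)
    (hHcard : ∀ e ∈ H, #e = r) (hbush : ¬ContainsBush 1 (r - 1) s 1 H) (h𝓟 : 𝓟 ⊆ H)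
    (h𝓟u : ∀ P ∈ 𝓟, u ∈ P) (hstar : (𝓟 : Set (Finset V)).Pairwise fun P₁ P₂ => P₁ ∩ P₂ = {u})
    (hs𝓟 : s ≤ #𝓟) (hnormal : ∀ P ∈ 𝓟, s - 1 ≤ #(replacements H P u))
    (hQ'sub : ∀ P ∈ 𝓟, Q' P ⊆ replacements H P u)
    (hQ'card : ∀ P ∈ 𝓟, #(Q' P) = min s #(replacements H P u))
    (hsep : ∀ P ∈ 𝓟, ∀ P' ∈ 𝓟, Disjoint (Q' P) P') :
    ∃ T, #T = s - 1 ∧ ∀ P ∈ 𝓟, replacements H P u = T ∧ Disjoint P T := by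
  obtain ⟨P₀, hP₀⟩ : 𝓟.Nonempty := card_pos.1 (by omega)
  have hQ'_eq : ∀ P ∈ 𝓟, Q' P = Q' P₀ ∧ #(Q' P) = s - 1 := by
    intro P hP
    obtain ⟨t, hPt, ht𝓟, rfl⟩ := exists_subsuperset_card_eq
      (insert_subset hP (singleton_subset_iff.2 hP₀)) ((card_insert_le P {P₀}).trans (by simpa))
      hs𝓟
    obtain ⟨T, hT, hQ'T⟩ := exists_forall_eq_of_star_of_not_containsBush Q' hHcard hbush
      (ht𝓟.trans h𝓟) (fun P hP => h𝓟u P (ht𝓟 hP)) (hstar.mono (coe_subset.2 ht𝓟))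
      (fun P hP z hz => (mem_replacements.1 (hQ'sub P (ht𝓟 hP) hz)).2)
      (fun P hP => hQ'card P (ht𝓟 hP) ▸ le_min (by omega) (hnormal P (ht𝓟 hP)))
      (fun P hP P' hP' => hsep P (ht𝓟 hP) P' (ht𝓟 hP'))
    rw [hQ'T P (hPt (mem_insert_self P _)), hQ'T P₀ (hPt (by simp))]
    exact ⟨rfl, hT⟩
  have hQ'_eq_replacements : ∀ P ∈ 𝓟, Q' P = replacements H P u := by
    intro P hP
    have := hQ'card P hP
    have := (hQ'_eq P hP).2
    exact eq_of_subset_of_card_le (hQ'sub P hP) (by omega)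
  refine ⟨Q' P₀, (hQ'_eq P₀ hP₀).2, fun P hP => ⟨?_, (hsep P₀ hP₀ P hP).symm⟩⟩
  rw [← hQ'_eq_replacements P hP, (hQ'_eq P hP).1]

theorem replacements_subset_of_disjoint [Fintype V] {H : Finset (Finset V)} {r k : ℕ} {u : V}
    {𝓟 : Finset (Finset V)} {T Y : Finset V} (hHcard : ∀ e ∈ H, #e = r)
    (hbush : ¬ContainsBush 1 (r - 1) (k + 1) 1 H) (h𝓟 : 𝓟 ⊆ H) (h𝓟u : ∀ P ∈ 𝓟, u ∈ P)
    (hstar : (𝓟 : Set (Finset V)).Pairwise fun P₁ P₂ => P₁ ∩ P₂ = {u}) (h𝓟card : r + k ≤ #𝓟)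
    (hT : #T = k) (hQT : ∀ P ∈ 𝓟, replacements H P u = T) (hTP : ∀ P ∈ 𝓟, Disjoint P T)
    (hY : Y ∈ H) (huY : u ∈ Y) (hYT : Disjoint Y T) :
    replacements H Y u ⊆ T := by
  intro z hz
  by_contra hzT
  obtain ⟨hzY, hzH⟩ := mem_replacements.1 hz
  set W := insert z (Y.erase u)
  have huW : u ∉ W := by
    simpa [W] using fun h : u = z => hzY (h ▸ huY)
  obtain ⟨t, ht𝓟, htcard, htW⟩ := exists_subset_card_eq_forall_disjoint_of_star hstar huW
    (hHcard W hzH ▸ h𝓟card)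
  let e : t ≃ T := equivOfCardEq (htcard.trans hT.symm)
  let E : Option t → Finset V := fun i => i.elim Y Subtype.val
  let p : Option t → V := fun i => i.elim z fun P => e P
  have hEH : ∀ i, E i ∈ H := by
    rintro (_ | P)
    exacts [hY, h𝓟 (ht𝓟 P.2)]
  have hE : Pairwise fun i j => Disjoint ((E i).erase u) ((E j).erase u) := by
    have hYW : ∀ P ∈ t, Disjoint (Y.erase u) (P.erase u) := fun P hP =>
      (htW P hP).symm.mono (subset_insert _ _) (erase_subset _ _)
    rintro (_ | P) (_ | P') hne
    · exact absurd rfl hne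
    · exact hYW P' P'.2
    · exact (hYW P P.2).symm
    · exact disjoint_erase_of_inter_eq_singleton
        (hstar (ht𝓟 P.2) (ht𝓟 P'.2) fun h => hne (congrArg some (Subtype.ext h)))
  have hp : Injective p := by
    rintro (_ | P) (_ | P') h
    · rfl
    · exact absurd ((show z = e P' from h) ▸ (e P').2) hzT
    · exact absurd ((show e P = z from h) ▸ (e P).2) hzT
    · exact congrArg some (e.injective (Subtype.ext h))
  have hpE : ∀ i j, p i ∉ E j := by
    rintro (_ | P) (_ | P')
    · exact hzY
    · exact disjoint_right.1 (htW P' P'.2) (mem_insert_self z _)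
    · exact disjoint_right.1 hYT (e P).2
    · exact disjoint_right.1 (hTP P' (ht𝓟 P'.2)) (e P).2
  have hpH : ∀ i, insert (p i) ((E i).erase u) ∈ H := by
    rintro (_ | P)
    · exact hzH
    · exact (mem_replacements.1 (hQT P (ht𝓟 P.2) ▸ (e P).2)).2
  apply hbush
  simpa [htcard] using containsBush_of_star E p hEH (fun i => hHcard _ (hEH i))
    (by rintro (_ | P); exacts [huY, h𝓟u P (ht𝓟 P.2)]) hE hp hpE hpH

end

theorem unique_replacement_set_general {V : Type*} [Fintype V] [DecidableEq V]
    (r s : ℕ) (hs : 2 ≤ s)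
    (H : Finset (Finset V)) (hHcard : ∀ e ∈ H, e.card = r)
    (hbush : ¬ ContainsBush 1 (r - 1) s 1 H)
    (Q : Finset V → V → Finset V)
    (hQdef : ∀ Y u, Q Y u = Finset.univ.filter fun z => z ∉ Y ∧ insert z (Y.erase u) ∈ H)
    (hnormal : ∀ Y ∈ H, ∀ u ∈ Y, s - 1 ≤ (Q Y u).card)
    (Q' : Finset V → V → Finset V)
    (hQ'sub : ∀ Y ∈ H, ∀ u ∈ Y, Q' Y u ⊆ Q Y u)
    (hQ'card : ∀ Y ∈ H, ∀ u ∈ Y, (Q' Y u).card = min s (Q Y u).card)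
    (u : V) (𝓟 : Finset (Finset V)) (h𝓟 : 𝓟 ⊆ H)
    (h𝓟u : ∀ P ∈ 𝓟, u ∈ P)
    (hstar : ∀ P₁ ∈ 𝓟, ∀ P₂ ∈ 𝓟, P₁ ≠ P₂ → P₁ ∩ P₂ = {u})
    (hcard : r + 2 * s - 2 ≤ 𝓟.card)
    (hsep : Disjoint (𝓟.biUnion fun P => Q' P u) (𝓟.biUnion id)) :
    (∃! T : Finset V, T.card = s - 1 ∧ ∀ P ∈ 𝓟, Q P u = T) ∧
    ∀ T : Finset V, (T.card = s - 1 ∧ ∀ P ∈ 𝓟, Q P u = T) →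
      ∀ Y ∈ H, u ∈ Y → Disjoint Y T → Q Y u = T := by
  obtain rfl : Q = replacements H := funext fun Y => funext (hQdef Y)
  have hstar' : (𝓟 : Set (Finset V)).Pairwise fun P₁ P₂ => P₁ ∩ P₂ = {u} :=
    fun P₁ h₁ P₂ h₂ => hstar P₁ h₁ P₂ h₂
  have hsep' : ∀ P ∈ 𝓟, ∀ P' ∈ 𝓟, Disjoint (Q' P u) P' := fun P hP P' hP' =>
    (Finset.disjoint_biUnion_right _ _ _).1 ((Finset.disjoint_biUnion_left _ _ _).1 hsep P hP) P' hP'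
  obtain ⟨T, hTcard, hT⟩ := exists_replacements_eq_of_separable_star (fun P => Q' P u) hs hHcard
    hbush h𝓟 h𝓟u hstar' (by omega) (fun P hP => hnormal P (h𝓟 hP) u (h𝓟u P hP))
    (fun P hP => hQ'sub P (h𝓟 hP) u (h𝓟u P hP)) (fun P hP => hQ'card P (h𝓟 hP) u (h𝓟u P hP))
    hsep'
  obtain ⟨P₀, hP₀⟩ : 𝓟.Nonempty := Finset.card_pos.1 (by omega)
  have hT_unique : ∀ T' : Finset V, (T'.card = s - 1 ∧ ∀ P ∈ 𝓟, replacements H P u = T') → T' = T :=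
    fun T' hT' => (hT'.2 P₀ hP₀).symm.trans (hT P₀ hP₀).1
  refine ⟨⟨T, ⟨hTcard, fun P hP => (hT P hP).1⟩, hT_unique⟩, fun T' hT' Y hY huY hYT => ?_⟩
  obtain rfl := hT_unique T' hT'
  refine Finset.eq_of_subset_of_card_le ?_ (hTcard ▸ hnormal Y hY u huY)
  exact replacements_subset_of_disjoint hHcard (k := s - 1) (by rwa [Nat.sub_add_cancel (by omega)])
    h𝓟 h𝓟u hstar' (by omega) hTcard (fun P hP => (hT P hP).1) (fun P hP => (hT P hP).2) hY huY hYT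

/-- Claim 5.2: let `H` be an `s`-normal `r`-graph with no bush `B_{s,1}(1, r-1)`, and let
`𝓟 ⊆ H` be a separable star with kernel `{u}` of size at least `r + 2s - 2`. Then there is
a unique `T(u)` of size `s - 1` with `Q(P, u) = T(u)` for all `P ∈ 𝓟`; moreover
`Q(Y, u) = T(u)` for every edge `Y ∈ H` with `u ∈ Y` and `Y ∩ T(u) = ∅`. -/
theorem unique_replacement_set {V : Type*} [Fintype V] [DecidableEq V]
    (r s : ℕ) (hr : 3 ≤ r) (hs : 2 ≤ s)
    (H : Finset (Finset V)) (hHcard : ∀ e ∈ H, e.card = r)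
    (hbush : ¬ ContainsBush 1 (r - 1) s 1 H)
    (Q : Finset V → V → Finset V)
    (hQdef : ∀ Y u, Q Y u = Finset.univ.filter fun z => z ∉ Y ∧ insert z (Y.erase u) ∈ H)
    (hnormal : ∀ Y ∈ H, ∀ u ∈ Y, s - 1 ≤ (Q Y u).card)
    (Q' : Finset V → V → Finset V)
    (hQ'sub : ∀ Y ∈ H, ∀ u ∈ Y, Q' Y u ⊆ Q Y u)
    (hQ'card : ∀ Y ∈ H, ∀ u ∈ Y, (Q' Y u).card = min s (Q Y u).card)
    (u : V) (𝓟 : Finset (Finset V)) (h𝓟 : 𝓟 ⊆ H)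
    (h𝓟u : ∀ P ∈ 𝓟, u ∈ P)
    (hstar : ∀ P₁ ∈ 𝓟, ∀ P₂ ∈ 𝓟, P₁ ≠ P₂ → P₁ ∩ P₂ = {u})
    (hcard : r + 2 * s - 2 ≤ 𝓟.card)
    (hsep : Disjoint (𝓟.biUnion fun P => Q' P u) (𝓟.biUnion id)) :
    (∃! T : Finset V, T.card = s - 1 ∧ ∀ P ∈ 𝓟, Q P u = T) ∧
    ∀ T : Finset V, (T.card = s - 1 ∧ ∀ P ∈ 𝓟, Q P u = T) →
      ∀ Y ∈ H, u ∈ Y → Disjoint Y T → Q Y u = T :=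
  unique_replacement_set_general r s hs H hHcard hbush Q hQdef hnormal Q' hQ'sub hQ'card u 𝓟 h𝓟 h𝓟u
    hstar hcard hsep
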